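/- In Max M₂(ℂ), let L = {(a a; b b) : a, b ∈ ℂ} (matrices with equal columns), R = {(c d; c d) : c, d ∈ ℂ} (matrices with equal rows), E the one-dimensional subspace spanned by the identity matrix (1 0; 0 1), and F the one-dimensional subspace spanned by (1 0; 0 −1). Then L∘E∘R = M₂(ℂ) (the top of Max M₂(ℂ)) while L∘F∘R = {0} (the bottom of Max M₂(ℂ)). -/

import Mathlib

abbrev M2C := Matrix (Fin 2) (Fin 2) ℂ

/-- The quantale multiplication of `Max M₂(ℂ)`: `M∘N` is the closure of the linear span of
the products (all subspaces of `M₂(ℂ)` are closed). -/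
noncomputable def qmul (M N : Submodule ℂ M2C) : Submodule ℂ M2C :=
  (M * N).topologicalClosure

/-- The subspace `L = {(a a; b b)}` of matrices with equal columns. -/
noncomputable def eqColsSub : Submodule ℂ M2C where
  carrier := {m | m 0 0 = m 0 1 ∧ m 1 0 = m 1 1}
  add_mem' := by
    intro a b ha hb
    simp only [Set.mem_setOf_eq, Matrix.add_apply] at *
    rw [ha.1, ha.2, hb.1, hb.2]
    simp
  zero_mem' := ⟨rfl, rfl⟩
  smul_mem' := by
    intro c m hm
    simp only [Set.mem_setOf_eq, Matrix.smul_apply] at *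
    rw [hm.1, hm.2]
    simp

/-- The subspace `R = {(c d; c d)}` of matrices with equal rows. -/
noncomputable def eqRowsSub : Submodule ℂ M2C where
  carrier := {m | m 0 0 = m 1 0 ∧ m 0 1 = m 1 1}
  add_mem' := by
    intro a b ha hb
    simp only [Set.mem_setOf_eq, Matrix.add_apply] at *
    rw [ha.1, ha.2, hb.1, hb.2]
    simp
  zero_mem' := ⟨rfl, rfl⟩
  smul_mem' := by
    intro c m hm
    simp only [Set.mem_setOf_eq, Matrix.smul_apply] at *
    rw [hm.1, hm.2]
    simp

/-! Matrices in `L` are the `u 𝟙ᵀ` and those in `R` the `𝟙 wᵀ`, so `u 𝟙ᵀ · a · 𝟙 wᵀ = (𝟙ᵀ a 𝟙) u wᵀ`.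
The entries of the identity sum to `2`, so `L∘E∘R` contains every rank-one matrix and hence
everything; those of `diag(1, -1)` sum to `0`, so `L∘F∘R` vanishes. Subspaces of `M₂(ℂ)` are
finite dimensional, hence closed, so the closures in `∘` play no role. -/

open Matrix

lemma qmul_eq_mul (M N : Submodule ℂ M2C) : qmul M N = M * N :=
  (Submodule.closed_of_finiteDimensional (M * N)).submodule_topologicalClosure_eq

lemma mem_eqColsSub_iff {m : M2C} : m ∈ eqColsSub ↔ ∃ v, vecMulVec v 1 = m := by
  refine ⟨fun ⟨h0, h1⟩ => ⟨fun i => m i 0, ?_⟩, ?_⟩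
  · ext i j
    fin_cases i <;> fin_cases j <;> simp [vecMulVec_apply, h0, h1]
  · rintro ⟨v, rfl⟩
    simp [eqColsSub]

lemma mem_eqRowsSub_iff {m : M2C} : m ∈ eqRowsSub ↔ ∃ w, vecMulVec 1 w = m := by
  refine ⟨fun ⟨h0, h1⟩ => ⟨fun j => m 0 j, ?_⟩, ?_⟩
  · ext i j
    fin_cases i <;> fin_cases j <;> simp [vecMulVec_apply, h0, h1]
  · rintro ⟨w, rfl⟩
    simp [eqRowsSub]

theorem Matrix.vecMulVec_mul_mul_vecMulVec {l m n o α : Type*} [CommSemiring α] [Fintype m]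
    [Fintype n] (u : l → α) (v : m → α) (A : Matrix m n α) (w : n → α) (x : o → α) :
    vecMulVec u v * A * vecMulVec w x = vecMulVec u ((v ᵥ* A ⬝ᵥ w) • x) := by
  rw [vecMulVec_mul, vecMulVec_mul_vecMulVec]

theorem Matrix.single_eq_vecMulVec_single {m n α : Type*} [DecidableEq m] [DecidableEq n]
    [MulZeroOneClass α] (i : m) (j : n) (c : α) :
    single i j c = vecMulVec (Pi.single i 1) (Pi.single j c) := by
  ext k l
  simp [-mul_ite, single, vecMulVec, ite_and, Pi.single_apply, eq_comm]

theorem Matrix.eq_top_of_vecMulVec_mem {m n R α : Type*} [Fintype m] [Fintype n] [DecidableEq m]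
    [DecidableEq n] [Semiring R] [Semiring α] [Module R α] {P : Submodule R (Matrix m n α)}
    (h : ∀ u v, vecMulVec u v ∈ P) : P = ⊤ := by
  refine eq_top_iff.2 fun M _ => ?_
  rw [matrix_eq_sum_single M]
  refine Submodule.sum_mem _ fun i _ => Submodule.sum_mem _ fun j _ => ?_
  rw [single_eq_vecMulVec_single]
  exact h _ _

theorem Submodule.mul_span_singleton_mul_eq_bot {R A : Type*} [CommSemiring R] [Semiring A]
    [Algebra R A] {M N : Submodule R A} {a : A} (h : ∀ m ∈ M, ∀ n ∈ N, m * a * n = 0) :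
    M * span R {a} * N = ⊥ := by
  refine eq_bot_iff.2 <| mul_le.2 fun y hy n hn => ?_
  obtain ⟨m, hm, rfl⟩ := mem_mul_span_singleton.1 hy
  exact (mem_bot R).2 (h m hm n hn)

lemma eqColsSub_mul_eqRowsSub : eqColsSub * eqRowsSub = ⊤ := by
  refine eq_top_of_vecMulVec_mem fun u v => ?_
  have h := Submodule.mul_mem_mul (mem_eqColsSub_iff.2 ⟨u, rfl⟩)
    (mem_eqRowsSub_iff.2 ⟨(2 : ℂ)⁻¹ • v, rfl⟩)
  rw [vecMulVec_mul_vecMulVec] at h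
  simpa [smul_smul] using h

/-- In `Max M₂(ℂ)`, with `L` the matrices with equal columns, `R` the matrices
with equal rows, `E = ℂ·(1 0; 0 1)` and `F = ℂ·(1 0; 0 -1)`, one has `L∘E∘R = M₂(ℂ)` (the
top of `Max M₂(ℂ)`) while `L∘F∘R = {0}` (the bottom of `Max M₂(ℂ)`). -/
theorem maxM2C_LER_top_LFR_bot :
    qmul (qmul eqColsSub (Submodule.span ℂ {(1 : M2C)})) eqRowsSub = ⊤ ∧
    qmul (qmul eqColsSub (Submodule.span ℂ {(!![1, 0; 0, -1] : M2C)})) eqRowsSub = ⊥ := by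
  simp only [qmul_eq_mul, ← Submodule.one_eq_span, mul_one]
  refine ⟨eqColsSub_mul_eqRowsSub, Submodule.mul_span_singleton_mul_eq_bot ?_⟩
  rintro _ hm _ hn
  obtain ⟨v, rfl⟩ := mem_eqColsSub_iff.1 hm
  obtain ⟨w, rfl⟩ := mem_eqRowsSub_iff.1 hn
  rw [vecMulVec_mul_mul_vecMulVec]
  simp [vecMul, dotProduct, Fin.sum_univ_two]
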